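/- arXiv:1808.04337 — 2 statements merged into one kernel-verified Lean document; each statement's English description precedes it below -/
import Mathlib

section
/- The size lower bound: for measure networks X, Y and p ∈ [1,∞], 2 d_{N,p}(X,Y) ≥ |size_p(X) − size_p(Y)|, where size_p(X) := ‖ω_X‖_{L^p(μ_X ⊗ μ_X)}. -/
open MeasureTheory ENNReal

/-- The set of couplings between two measures: probability-type measures on the product
with the prescribed marginals. -/
def Coupling {X Y : Type*} [MeasurableSpace X] [MeasurableSpace Y]
    (μX : Measure X) (μY : Measure Y) : Set (Measure (X × Y)) :=
  {μ | μ.fst = μX ∧ μ.snd = μY}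

/-- The `p`-distortion of a coupling `μ` between two measure networks, namely
`‖ω_X - ω_Y‖_{L^p(μ ⊗ μ)}` (for `p = ∞` this is the essential supremum). -/
noncomputable def dis {X Y : Type*} [MeasurableSpace X] [MeasurableSpace Y]
    (ωX : X × X → ℝ) (ωY : Y × Y → ℝ) (p : ℝ≥0∞) (μ : Measure (X × Y)) : ℝ≥0∞ :=
  eLpNorm (fun q : (X × Y) × (X × Y) => ωX (q.1.1, q.2.1) - ωY (q.1.2, q.2.2)) p (μ.prod μ)

/-- The network Gromov–Wasserstein distance: half the infimal `p`-distortion over couplings. -/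
noncomputable def dN {X Y : Type*} [MeasurableSpace X] [MeasurableSpace Y]
    (ωX : X × X → ℝ) (ωY : Y × Y → ℝ) (p : ℝ≥0∞) (μX : Measure X) (μY : Measure Y) : ℝ≥0∞ :=
  (1 / 2) * ⨅ μ ∈ Coupling μX μY, dis ωX ωY p μ

/-- The `p`-th size of a measure network: `size_p(X) = ‖ω_X‖_{L^p(μ_X ⊗ μ_X)}`. -/
noncomputable def sizeN {X : Type*} [MeasurableSpace X]
    (p : ℝ≥0∞) (ωX : X × X → ℝ) (μX : Measure X) : ℝ≥0∞ :=
  eLpNorm ωX p (μX.prod μX)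

/- A coupling of `μ_X` and `μ_Y` transports `μ_X ⊗ μ_X` and `μ_Y ⊗ μ_Y` to `μ ⊗ μ` along the
two projections, so both sizes are `L^p(μ ⊗ μ)` norms; the bound is then the triangle inequality
for `ω_X ∘ π_X = (ω_X ∘ π_X - ω_Y ∘ π_Y) + ω_Y ∘ π_Y`, taken at every coupling. -/

namespace Coupling

variable {X Y : Type*} [MeasurableSpace X] [MeasurableSpace Y]
  {μX : Measure X} {μY : Measure Y} {μ : Measure (X × Y)}

lemma isFiniteMeasure [IsFiniteMeasure μX] (hμ : μ ∈ Coupling μX μY) : IsFiniteMeasure μ :=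
  ⟨by rw [← Measure.fst_univ, hμ.1]; exact measure_lt_top μX _⟩

lemma map_swap (hμ : μ ∈ Coupling μX μY) : μ.map Prod.swap ∈ Coupling μY μX :=
  ⟨by rw [Measure.fst_map_swap, hμ.2], by rw [Measure.snd_map_swap, hμ.1]⟩

end Coupling

lemma sizeN_map {Z W : Type*} [MeasurableSpace Z] [MeasurableSpace W]
    (ν : Measure Z) [SFinite ν] {f : Z → W} (hf : Measurable f)
    {ω : W × W → ℝ} (hω : Measurable ω) (p : ℝ≥0∞) :
    sizeN p ω (ν.map f) = eLpNorm (fun q : Z × Z => ω (f q.1, f q.2)) p (ν.prod ν) := by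
  rw [sizeN, Measure.map_prod_map ν ν hf hf,
    eLpNorm_map_measure hω.aestronglyMeasurable (hf.prodMap hf).aemeasurable]
  rfl

section Distortion

variable {X Y : Type*} [MeasurableSpace X] [MeasurableSpace Y]
  {μX : Measure X} {μY : Measure Y} {μ : Measure (X × Y)}
  {ωX : X × X → ℝ} {ωY : Y × Y → ℝ}

lemma dis_map_swap [SFinite μ] (hωX : Measurable ωX) (hωY : Measurable ωY) (p : ℝ≥0∞) :
    dis ωY ωX p (μ.map Prod.swap) = dis ωX ωY p μ := by
  have hdiff : Measurable fun q : (Y × X) × (Y × X) => ωY (q.1.1, q.2.1) - ωX (q.1.2, q.2.2) := by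
    fun_prop
  rw [dis, Measure.map_prod_map μ μ measurable_swap measurable_swap,
    eLpNorm_map_measure hdiff.aestronglyMeasurable
      (measurable_swap.prodMap measurable_swap).aemeasurable, dis, ← eLpNorm_neg]
  congr 1
  ext q
  simp

lemma sizeN_le_dis_add_sizeN [SFinite μ] (hμ : μ ∈ Coupling μX μY)
    (hωX : Measurable ωX) (hωY : Measurable ωY) {p : ℝ≥0∞} (hp : 1 ≤ p) :
    sizeN p ωX μX ≤ dis ωX ωY p μ + sizeN p ωY μY := by
  obtain ⟨hfst, hsnd⟩ := hμ
  set f : (X × Y) × (X × Y) → ℝ := fun q => ωX (q.1.1, q.2.1)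
  set g : (X × Y) × (X × Y) → ℝ := fun q => ωY (q.1.2, q.2.2)
  have hf : Measurable f := by fun_prop
  have hg : Measurable g := by fun_prop
  calc sizeN p ωX μX = eLpNorm ((f - g) + g) p (μ.prod μ) := by
        rw [sub_add_cancel, ← hfst, Measure.fst, sizeN_map μ measurable_fst hωX]
    _ ≤ eLpNorm (f - g) p (μ.prod μ) + eLpNorm g p (μ.prod μ) :=
        eLpNorm_add_le (hf.sub hg).aestronglyMeasurable hg.aestronglyMeasurable hp
    _ = dis ωX ωY p μ + sizeN p ωY μY := by
        rw [← hsnd, Measure.snd, sizeN_map μ measurable_snd hωY]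
        rfl

lemma sizeN_sub_sizeN_le_dis [SFinite μ] (hμ : μ ∈ Coupling μX μY)
    (hωX : Measurable ωX) (hωY : Measurable ωY) {p : ℝ≥0∞} (hp : 1 ≤ p) :
    (sizeN p ωX μX - sizeN p ωY μY) ⊔ (sizeN p ωY μY - sizeN p ωX μX) ≤ dis ωX ωY p μ := by
  refine sup_le (tsub_le_iff_right.2 (sizeN_le_dis_add_sizeN hμ hωX hωY hp))
    (tsub_le_iff_right.2 ?_)
  rw [← dis_map_swap hωX hωY p]
  exact sizeN_le_dis_add_sizeN (Coupling.map_swap hμ) hωY hωX hp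

end Distortion

lemma two_mul_dN {X Y : Type*} [MeasurableSpace X] [MeasurableSpace Y]
    (ωX : X × X → ℝ) (ωY : Y × Y → ℝ) (p : ℝ≥0∞) (μX : Measure X) (μY : Measure Y) :
    2 * dN ωX ωY p μX μY = ⨅ μ ∈ Coupling μX μY, dis ωX ωY p μ := by
  rw [dN, ← mul_assoc, one_div, ENNReal.mul_inv_cancel two_ne_zero ofNat_ne_top, one_mul]

theorem size_lower_bound_general
    {X Y : Type*} [MeasurableSpace X] [MeasurableSpace Y]
    (μX : Measure X) (μY : Measure Y) [IsProbabilityMeasure μX]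
    (ωX : X × X → ℝ) (ωY : Y × Y → ℝ)
    (hωX : Measurable ωX) (hωY : Measurable ωY)
    (p : ℝ≥0∞) (hp : 1 ≤ p) :
    (sizeN p ωX μX - sizeN p ωY μY) ⊔ (sizeN p ωY μY - sizeN p ωX μX)
      ≤ 2 * dN ωX ωY p μX μY := by
  rw [two_mul_dN]
  refine le_iInf₂ fun μ hμ => ?_
  have := Coupling.isFiniteMeasure hμ
  exact sizeN_sub_sizeN_le_dis hμ hωX hωY hp

/-- **The size lower bound**: `2 d_{N,p}(X,Y) ≥ |size_p(X) − size_p(Y)|`. -/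
theorem size_lower_bound
    {X Y : Type*} [TopologicalSpace X] [PolishSpace X] [MeasurableSpace X] [BorelSpace X]
    [TopologicalSpace Y] [PolishSpace Y] [MeasurableSpace Y] [BorelSpace Y]
    (μX : Measure X) (μY : Measure Y) [IsProbabilityMeasure μX] [IsProbabilityMeasure μY]
    (ωX : X × X → ℝ) (ωY : Y × Y → ℝ)
    (hωX : Measurable ωX) (hωY : Measurable ωY)
    (hbX : ∃ M, ∀ q, |ωX q| ≤ M) (hbY : ∃ M, ∀ q, |ωY q| ≤ M)
    (p : ℝ≥0∞) (hp : 1 ≤ p) :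
    (sizeN p ωX μX - sizeN p ωY μY) ⊔ (sizeN p ωY μY - sizeN p ωX μX)
      ≤ 2 * dN ωX ωY p μX μY :=
  size_lower_bound_general μX μY ωX ωY hωX hωY p hp
end

section
/- The Second Lower Bound and its real-line form: for measure networks X, Y and p ∈ [1,∞], 2 d_{N,p}(X,Y) ≥ inf over couplings μ ∈ C(μ_X⊗μ_X, μ_Y⊗μ_Y) of ‖ω_X − ω_Y‖_{L^p(μ)}, and this infimum equals W_p((ω_X)_*(μ_X⊗μ_X), (ω_Y)_*(μ_Y⊗μ_Y)), the p-Wasserstein distance between the distributions of edge weights. -/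
/-!
For the inequality, a coupling `μ` of `μ_X` and `μ_Y` yields the coupling `μ ⊗ μ` (with its
coordinates regrouped) of `μ_X ⊗ μ_X` and `μ_Y ⊗ μ_Y`, and the two distortions agree.

For the equality, pushing a coupling of `μ_X ⊗ μ_X` and `μ_Y ⊗ μ_Y` forward along `ω_X × ω_Y`
gives a coupling of the edge-weight distributions with the same cost. Conversely, a coupling `θ`
of the edge-weight distributions lifts: draw `(s, t) ∼ θ`, then draw independently a pair of
points of `X` from the conditional law of `μ_X ⊗ μ_X` given `ω_X = s` and a pair of points of `Y`
from that of `μ_Y ⊗ μ_Y` given `ω_Y = t`. Such conditional laws exist because the spaces are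
standard Borel, and the lifted coupling is mapped back onto `θ` by `ω_X × ω_Y`.
-/

open MeasureTheory ENNReal

/-- The `p`-th Wasserstein distance between two Borel measures on `ℝ`, as an infimum of
`L^p` transport costs over couplings. -/
noncomputable def Wp (p : ℝ≥0∞) (α β : Measure ℝ) : ℝ≥0∞ :=
  ⨅ θ ∈ Coupling α β, eLpNorm (fun q : ℝ × ℝ => q.1 - q.2) p θ

open ProbabilityTheory

section Couplings

variable {A B C D : Type*} [MeasurableSpace A] [MeasurableSpace B] [MeasurableSpace C]
  [MeasurableSpace D]

lemma isProbabilityMeasure_of_mem_coupling {α : Measure A} {β : Measure B}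
    [IsProbabilityMeasure α] {μ : Measure (A × B)} (hμ : μ ∈ Coupling α β) :
    IsProbabilityMeasure μ :=
  ⟨by rw [← Measure.fst_univ, hμ.1, measure_univ]⟩

lemma ae_fst_of_mem_coupling {α : Measure A} {β : Measure B} {μ : Measure (A × B)}
    (hμ : μ ∈ Coupling α β) {P : A → Prop} (h : ∀ᵐ a ∂α, P a) : ∀ᵐ q ∂μ, P q.1 := by
  rw [← hμ.1] at h
  exact ae_of_ae_map measurable_fst.aemeasurable h

lemma ae_snd_of_mem_coupling {α : Measure A} {β : Measure B} {μ : Measure (A × B)}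
    (hμ : μ ∈ Coupling α β) {P : B → Prop} (h : ∀ᵐ b ∂β, P b) : ∀ᵐ q ∂μ, P q.2 := by
  rw [← hμ.2] at h
  exact ae_of_ae_map measurable_snd.aemeasurable h

lemma map_prodMap_mem_coupling {α : Measure A} {β : Measure B} {μ : Measure (A × B)}
    (hμ : μ ∈ Coupling α β) {f : A → C} {g : B → D} (hf : Measurable f) (hg : Measurable g) :
    μ.map (Prod.map f g) ∈ Coupling (α.map f) (β.map g) := by
  constructor
  · rw [← hμ.1, Measure.fst, Measure.fst, Measure.map_map measurable_fst (hf.prodMap hg),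
      Measure.map_map hf measurable_fst]
    rfl
  · rw [← hμ.2, Measure.snd, Measure.snd, Measure.map_map measurable_snd (hf.prodMap hg),
      Measure.map_map hg measurable_snd]
    rfl

lemma measurable_prodProdProdComm : Measurable (Equiv.prodProdProdComm A B C D) :=
  (measurable_fst.fst.prodMk measurable_snd.fst).prodMk
    (measurable_fst.snd.prodMk measurable_snd.snd)

lemma map_prodProdProdComm_mem_coupling {α : Measure A} {β : Measure B} {γ : Measure C}
    {δ : Measure D} {μ : Measure (A × B)} {ν : Measure (C × D)} [SFinite μ] [SFinite ν]
    (hμ : μ ∈ Coupling α β) (hν : ν ∈ Coupling γ δ) :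
    (μ.prod ν).map (Equiv.prodProdProdComm A B C D) ∈ Coupling (α.prod γ) (β.prod δ) := by
  constructor
  · rw [← hμ.1, ← hν.1, Measure.fst, Measure.map_map measurable_fst measurable_prodProdProdComm,
      Measure.fst, Measure.fst, Measure.map_prod_map _ _ measurable_fst measurable_fst]
    rfl
  · rw [← hμ.2, ← hν.2, Measure.snd, Measure.map_map measurable_snd measurable_prodProdProdComm,
      Measure.snd, Measure.snd, Measure.map_prod_map _ _ measurable_snd measurable_snd]
    rfl

lemma eLpNorm_sub_eq_eLpNorm_map_prodMap {E : Type*} [NormedAddCommGroup E] [MeasurableSpace E]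
    [BorelSpace E] [SecondCountableTopology E] {f : A → E} {g : B → E} (hf : Measurable f)
    (hg : Measurable g) (p : ℝ≥0∞) (μ : Measure (A × B)) :
    eLpNorm (fun q => f q.1 - g q.2) p μ
      = eLpNorm (fun q : E × E => q.1 - q.2) p (μ.map (Prod.map f g)) :=
  (eLpNorm_map_measure (measurable_fst.sub measurable_snd).aestronglyMeasurable
    (hf.prodMap hg).aemeasurable).symm

section ParallelComp

variable {κ : Kernel A C} {η : Kernel B D} [IsMarkovKernel κ] [IsMarkovKernel η]

lemma fst_parallelComp_comp (θ : Measure (A × B)) : ((κ ∥ₖ η) ∘ₘ θ).fst = κ ∘ₘ θ.fst := by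
  have hfst : (κ ∥ₖ η).map Prod.fst = κ ∘ₖ Kernel.deterministic Prod.fst measurable_fst := by
    ext1 x
    rw [Kernel.map_apply _ measurable_fst, Kernel.parallelComp_apply,
      Kernel.comp_deterministic_eq_comap, Kernel.comap_apply]
    exact Measure.fst_prod
  rw [Measure.fst, Measure.map_comp _ _ measurable_fst, hfst, ← Measure.comp_assoc,
    Measure.deterministic_comp_eq_map]
  rfl

lemma snd_parallelComp_comp (θ : Measure (A × B)) : ((κ ∥ₖ η) ∘ₘ θ).snd = η ∘ₘ θ.snd := by
  have hsnd : (κ ∥ₖ η).map Prod.snd = η ∘ₖ Kernel.deterministic Prod.snd measurable_snd := by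
    ext1 x
    rw [Kernel.map_apply _ measurable_snd, Kernel.parallelComp_apply,
      Kernel.comp_deterministic_eq_comap, Kernel.comap_apply]
    exact Measure.snd_prod
  rw [Measure.snd, Measure.map_comp _ _ measurable_snd, hsnd, ← Measure.comp_assoc,
    Measure.deterministic_comp_eq_map]
  rfl

end ParallelComp

lemma map_condDistrib_id_ae_eq_id [StandardBorelSpace A] [Nonempty A] [StandardBorelSpace C]
    [Nonempty C] (α : Measure A) [IsFiniteMeasure α] {f : A → C} (hf : Measurable f) :
    (condDistrib id f α).map f =ᵐ[α.map f] Kernel.id := by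
  have hcomp : condDistrib f f α =ᵐ[α.map f] (condDistrib id f α).map f :=
    condDistrib_comp f aemeasurable_id hf
  exact hcomp.symm.trans (condDistrib_self f)

theorem exists_mem_coupling_map_prodMap_eq [StandardBorelSpace A] [StandardBorelSpace B]
    [StandardBorelSpace C] [StandardBorelSpace D] (α : Measure A) (β : Measure B)
    [IsProbabilityMeasure α] [IsProbabilityMeasure β] {f : A → C} {g : B → D}
    (hf : Measurable f) (hg : Measurable g) {θ : Measure (C × D)}
    (hθ : θ ∈ Coupling (α.map f) (β.map g)) :
    ∃ μ ∈ Coupling α β, μ.map (Prod.map f g) = θ := by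
  have : Nonempty A := Measure.nonempty_of_neZero α
  have : Nonempty B := Measure.nonempty_of_neZero β
  have : Nonempty C := .map f ‹_›
  have : Nonempty D := .map g ‹_›
  set κ := condDistrib id f α
  set η := condDistrib id g β
  refine ⟨(κ ∥ₖ η) ∘ₘ θ, ⟨?_, ?_⟩, ?_⟩
  · rw [fst_parallelComp_comp, hθ.1, condDistrib_comp_map hf.aemeasurable aemeasurable_id,
      Measure.map_id]
  · rw [snd_parallelComp_comp, hθ.2, condDistrib_comp_map hg.aemeasurable aemeasurable_id,
      Measure.map_id]
  · have hfiber : ∀ᵐ q ∂θ, (κ ∥ₖ η).map (Prod.map f g) q = Kernel.id q := by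
      filter_upwards [ae_fst_of_mem_coupling hθ (map_condDistrib_id_ae_eq_id α hf),
        ae_snd_of_mem_coupling hθ (map_condDistrib_id_ae_eq_id β hg)] with q hκ hη
      rw [Kernel.map_apply _ (hf.prodMap hg), Kernel.parallelComp_apply,
        ← Measure.map_prod_map _ _ hf hg, ← Kernel.map_apply _ hf, ← Kernel.map_apply _ hg, hκ,
        hη, Kernel.id_apply, Kernel.id_apply, Kernel.id_apply, Measure.dirac_prod_dirac]
    rw [Measure.map_comp _ _ (hf.prodMap hg), Measure.comp_congr hfiber, Measure.id_comp]

theorem iInf_coupling_eLpNorm_sub_eq_Wp [StandardBorelSpace A] [StandardBorelSpace B]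
    (α : Measure A) (β : Measure B) [IsProbabilityMeasure α] [IsProbabilityMeasure β]
    {f : A → ℝ} {g : B → ℝ} (hf : Measurable f) (hg : Measurable g) (p : ℝ≥0∞) :
    ⨅ μ ∈ Coupling α β, eLpNorm (fun q => f q.1 - g q.2) p μ = Wp p (α.map f) (β.map g) := by
  refine le_antisymm (le_iInf₂ fun θ hθ => ?_) (le_iInf₂ fun μ hμ => ?_)
  · obtain ⟨μ, hμ, rfl⟩ := exists_mem_coupling_map_prodMap_eq α β hf hg hθ
    exact (iInf₂_le μ hμ).trans_eq (eLpNorm_sub_eq_eLpNorm_map_prodMap hf hg p μ)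
  · exact (iInf₂_le _ (map_prodMap_mem_coupling hμ hf hg)).trans_eq
      (eLpNorm_sub_eq_eLpNorm_map_prodMap hf hg p μ).symm

theorem iInf_coupling_prod_le_two_mul_dN (α : Measure A) (β : Measure B)
    [IsProbabilityMeasure α] {ωA : A × A → ℝ} {ωB : B × B → ℝ} (hωA : Measurable ωA)
    (hωB : Measurable ωB) (p : ℝ≥0∞) :
    ⨅ μ ∈ Coupling (α.prod α) (β.prod β), eLpNorm (fun q => ωA q.1 - ωB q.2) p μ
      ≤ 2 * dN ωA ωB p α β := by
  rw [dN, ← mul_assoc, ENNReal.mul_div_cancel two_ne_zero ofNat_ne_top, one_mul]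
  refine le_iInf₂ fun μ hμ => ?_
  have := isProbabilityMeasure_of_mem_coupling hμ
  exact (iInf₂_le _ (map_prodProdProdComm_mem_coupling hμ hμ)).trans_eq
    (eLpNorm_map_measure
      ((hωA.comp measurable_fst).sub (hωB.comp measurable_snd)).aestronglyMeasurable
      measurable_prodProdProdComm.aemeasurable)

end Couplings

theorem second_lower_bound_general
    {X Y : Type*} [TopologicalSpace X] [PolishSpace X] [MeasurableSpace X] [BorelSpace X]
    [TopologicalSpace Y] [PolishSpace Y] [MeasurableSpace Y] [BorelSpace Y]
    (μX : Measure X) (μY : Measure Y) [IsProbabilityMeasure μX] [IsProbabilityMeasure μY]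
    (ωX : X × X → ℝ) (ωY : Y × Y → ℝ)
    (hωX : Measurable ωX) (hωY : Measurable ωY)
    (p : ℝ≥0∞) :
    (⨅ μ ∈ Coupling (μX.prod μX) (μY.prod μY),
        eLpNorm (fun q : (X × X) × (Y × Y) => ωX q.1 - ωY q.2) p μ)
      ≤ 2 * dN ωX ωY p μX μY ∧
    (⨅ μ ∈ Coupling (μX.prod μX) (μY.prod μY),
        eLpNorm (fun q : (X × X) × (Y × Y) => ωX q.1 - ωY q.2) p μ)
      = Wp p ((μX.prod μX).map ωX) ((μY.prod μY).map ωY) :=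
  ⟨iInf_coupling_prod_le_two_mul_dN μX μY hωX hωY p,
    iInf_coupling_eLpNorm_sub_eq_Wp (μX.prod μX) (μY.prod μY) hωX hωY p⟩

/-- **The Second Lower Bound and its real-line form**: for measure networks `X`, `Y`,
`2 d_{N,p}(X,Y) ≥ inf over couplings μ of μ_X ⊗ μ_X and μ_Y ⊗ μ_Y of ‖ω_X − ω_Y‖_{L^p(μ)}`,
and this infimum equals the `p`-Wasserstein distance between the edge-weight distributions
`(ω_X)_*(μ_X ⊗ μ_X)` and `(ω_Y)_*(μ_Y ⊗ μ_Y)`. -/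
theorem second_lower_bound
    {X Y : Type*} [TopologicalSpace X] [PolishSpace X] [MeasurableSpace X] [BorelSpace X]
    [TopologicalSpace Y] [PolishSpace Y] [MeasurableSpace Y] [BorelSpace Y]
    (μX : Measure X) (μY : Measure Y) [IsProbabilityMeasure μX] [IsProbabilityMeasure μY]
    (ωX : X × X → ℝ) (ωY : Y × Y → ℝ)
    (hωX : Measurable ωX) (hωY : Measurable ωY)
    (hbX : ∃ M, ∀ q, |ωX q| ≤ M) (hbY : ∃ M, ∀ q, |ωY q| ≤ M)
    (p : ℝ≥0∞) (hp : 1 ≤ p) :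
    (⨅ μ ∈ Coupling (μX.prod μX) (μY.prod μY),
        eLpNorm (fun q : (X × X) × (Y × Y) => ωX q.1 - ωY q.2) p μ)
      ≤ 2 * dN ωX ωY p μX μY ∧
    (⨅ μ ∈ Coupling (μX.prod μX) (μY.prod μY),
        eLpNorm (fun q : (X × X) × (Y × Y) => ωX q.1 - ωY q.2) p μ)
      = Wp p ((μX.prod μX).map ωX) ((μY.prod μY).map ωY) :=
  second_lower_bound_general μX μY ωX ωY hωX hωY p
end
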